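/- Let f : ℝ → ℝ and u : ℝ → ℝ be of class C⁴ and fix x ∈ ℝ. For the QUICK scheme (κ = 1/2), the central flux balance approximates the cell-averaged convection operator to third order: (1/(2h))·(f(uL(u,h)) + f(uR(u,h)) − f(uL⁻(u,h)) − f(uR⁻(u,h))) − (1/h)·∫_{x−h/2}^{x+h/2} (f∘u)'(ξ) dξ = O(h³) as h → 0⁺. That is, the QUICK scheme is a third-order finite-volume discretization of the integral form of a general nonlinear conservation law with point-valued solutions. -/

import Mathlib

open Asymptotics Filter Set MeasureTheory

noncomputable def uL (κ x : ℝ) (v : ℝ → ℝ) (h : ℝ) : ℝ :=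
  (v x + v (x + h)) / 2 - ((1 - κ) / 4) * (v (x + h) - 2 * v x + v (x - h))

noncomputable def uR (κ x : ℝ) (v : ℝ → ℝ) (h : ℝ) : ℝ :=
  (v (x + h) + v x) / 2 - ((1 - κ) / 4) * (v (x + 2 * h) - 2 * v (x + h) + v x)

/-- Left-face interpolated value from the left: same formula with `x` replaced by `x - h`. -/
noncomputable def uLm (κ x : ℝ) (v : ℝ → ℝ) (h : ℝ) : ℝ := uL κ (x - h) v h

/-- Left-face interpolated value from the right: same formula with `x` replaced by `x - h`. -/
noncomputable def uRm (κ x : ℝ) (v : ℝ → ℝ) (h : ℝ) : ℝ := uR κ (x - h) v h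

/-!
Taylor-expand `u` at `x` and `f` at `u x` to cubics `P` and `F` with `O(h⁴)` remainders. Each face
value is a linear stencil `∑ wᵢ v (x + cᵢ h)` with `∑ wᵢ = 1`: it stays within `O(h)` of `u x`, and
replacing `u` by `P` moves it by `O(h⁴)`. As `f` is locally Lipschitz, the flux balance minus the
exact cell integral therefore changes by `O(h⁴)` when `(f, u)` is replaced by `(F, P)`, and for
cubics that difference is an explicit polynomial divisible by `h⁴`.
-/

open Topology

theorem taylor_isBigO_univ {E : Type*} [NormedAddCommGroup E] [NormedSpace ℝ E] {f : ℝ → E}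
    {x₀ : ℝ} {n : ℕ} (hf : ContDiff ℝ (n + 1) f) :
    (fun x ↦ f x - taylorWithinEval f n univ x₀ x) =O[𝓝 x₀] fun x ↦ (x - x₀) ^ (n + 1) := by
  have hnext : (fun x ↦ taylorWithinEval f (n + 1) univ x₀ x - taylorWithinEval f n univ x₀ x)
      =O[𝓝 x₀] fun x ↦ (x - x₀) ^ (n + 1) := by
    simp only [taylorWithinEval_succ, add_sub_cancel_left]
    refine .of_bound
      (‖((n + 1 : ℝ) * n.factorial)⁻¹‖ * ‖iteratedDerivWithin (n + 1) f univ x₀‖)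
      (.of_forall fun x ↦ ?_)
    rw [norm_smul, norm_mul, mul_right_comm]
  exact ((taylor_isLittleO_univ (by exact_mod_cast hf)).isBigO.add hnext).congr_left
    fun x ↦ by abel

theorem ContDiff.exists_cubic_isBigO {f : ℝ → ℝ} (hf : ContDiff ℝ 4 f) (a : ℝ) :
    ∃ c₁ c₂ c₃ : ℝ,
      (fun y ↦ f y - (f a + c₁ * (y - a) + c₂ * (y - a) ^ 2 + c₃ * (y - a) ^ 3))
        =O[𝓝 a] fun y ↦ (y - a) ^ 4 := by
  refine ⟨iteratedDeriv 1 f a, iteratedDeriv 2 f a / 2, iteratedDeriv 3 f a / 6,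
    (taylor_isBigO_univ (n := 3) hf).congr_left fun y ↦ ?_⟩
  simp [taylor_within_apply, Nat.factorial]
  ring

noncomputable def stencil (s : List (ℝ × ℝ)) (v : ℝ → ℝ) (x h : ℝ) : ℝ :=
  (s.map fun p ↦ p.1 * v (x + p.2 * h)).sum

section Stencil
variable {s : List (ℝ × ℝ)} {v : ℝ → ℝ} {x : ℝ}

theorem stencil_sub (s : List (ℝ × ℝ)) (v w : ℝ → ℝ) (x h : ℝ) :
    stencil s (fun y ↦ v y - w y) x h = stencil s v x h - stencil s w x h := by
  induction s with
  | nil => simp [stencil]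
  | cons p s ih => simp only [stencil, List.map_cons, List.sum_cons] at *; rw [ih]; ring

theorem stencil_const (s : List (ℝ × ℝ)) (c x h : ℝ) :
    stencil s (fun _ ↦ c) x h = (s.map Prod.fst).sum * c := by
  induction s with
  | nil => simp [stencil]
  | cons p s ih => simp only [stencil, List.map_cons, List.sum_cons] at *; rw [ih]; ring

theorem isBigO_stencil {n : ℕ} (hv : v =O[𝓝 x] fun y ↦ (y - x) ^ n) :
    (fun h ↦ stencil s v x h) =O[𝓝 0] fun h ↦ h ^ n := by
  induction s with
  | nil => simpa [stencil] using isBigO_zero _ _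
  | cons p s ih =>
    have hp : Tendsto (fun h : ℝ ↦ x + p.2 * h) (𝓝 0) (𝓝 x) :=
      Continuous.tendsto' (by fun_prop) 0 x (by simp)
    have hterm : (fun h ↦ v (x + p.2 * h)) =O[𝓝 0] fun h ↦ h ^ n := by
      refine (hv.comp_tendsto hp).trans ?_
      simpa [Function.comp_def, mul_pow] using
        (isBigO_refl (fun h : ℝ ↦ h ^ n) _).const_mul_left (p.2 ^ n)
    simpa [stencil] using (hterm.const_mul_left p.1).add ih

theorem stencil_sub_self_isBigO (hs : (s.map Prod.fst).sum = 1) (hv : DifferentiableAt ℝ v x) :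
    (fun h ↦ stencil s v x h - v x) =O[𝓝 0] fun h ↦ h := by
  refine (isBigO_stencil (s := s) (n := 1) (by simpa using hv.isBigO_sub)).congr' ?_ (by simp)
  filter_upwards with h
  rw [stencil_sub, stencil_const, hs, one_mul]

theorem stencil_singleton (c : ℝ) (v : ℝ → ℝ) (x h : ℝ) :
    stencil [(1, c)] v x h = v (x + c * h) := by
  simp [stencil]

end Stencil

noncomputable def uLStencil (κ : ℝ) : List (ℝ × ℝ) :=
  [(1 - κ / 2, 0), ((1 + κ) / 4, 1), (-(1 - κ) / 4, -1)]

noncomputable def uRStencil (κ : ℝ) : List (ℝ × ℝ) :=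
  [(1 - κ / 2, 1), ((1 + κ) / 4, 0), (-(1 - κ) / 4, 2)]

noncomputable def uLmStencil (κ : ℝ) : List (ℝ × ℝ) :=
  [(1 - κ / 2, -1), ((1 + κ) / 4, 0), (-(1 - κ) / 4, -2)]

noncomputable def uRmStencil (κ : ℝ) : List (ℝ × ℝ) :=
  [(1 - κ / 2, 0), ((1 + κ) / 4, -1), (-(1 - κ) / 4, 1)]

theorem uL_eq_stencil (κ x : ℝ) (v : ℝ → ℝ) (h : ℝ) :
    uL κ x v h = stencil (uLStencil κ) v x h := by
  simp [uL, stencil, uLStencil, ← sub_eq_add_neg]; ring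

theorem uR_eq_stencil (κ x : ℝ) (v : ℝ → ℝ) (h : ℝ) :
    uR κ x v h = stencil (uRStencil κ) v x h := by
  simp [uR, stencil, uRStencil]; ring

theorem uLm_eq_stencil (κ x : ℝ) (v : ℝ → ℝ) (h : ℝ) :
    uLm κ x v h = stencil (uLmStencil κ) v x h := by
  simp [uLm, uL, stencil, uLmStencil]; ring_nf

theorem uRm_eq_stencil (κ x : ℝ) (v : ℝ → ℝ) (h : ℝ) :
    uRm κ x v h = stencil (uRmStencil κ) v x h := by
  simp [uRm, uR, stencil, uRmStencil]; ring_nf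

theorem isBigO_comp_stencil_sub {f F u P : ℝ → ℝ} {x : ℝ} {n : ℕ} {s : List (ℝ × ℝ)}
    (hs : (s.map Prod.fst).sum = 1) (hf : ContDiff ℝ 1 f)
    (hfF : (fun q ↦ f q - F q) =O[𝓝 (u x)] fun q ↦ (q - u x) ^ n)
    (huP : (fun y ↦ u y - P y) =O[𝓝 x] fun y ↦ (y - x) ^ n)
    (hu : DifferentiableAt ℝ u x) (hP : DifferentiableAt ℝ P x) (hPx : P x = u x) :
    (fun h ↦ f (stencil s u x h) - F (stencil s P x h)) =O[𝓝 0] fun h ↦ h ^ n := by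
  have tendsto_of_isBigO {g : ℝ → ℝ} (hg : (fun h ↦ g h - u x) =O[𝓝 0] fun h ↦ h) :
      Tendsto g (𝓝 0) (𝓝 (u x)) :=
    tendsto_sub_nhds_zero_iff.1 (hg.trans_tendsto tendsto_id)
  have hSu := stencil_sub_self_isBigO hs hu
  have hSP := stencil_sub_self_isBigO hs hP
  rw [hPx] at hSP
  have hlip : (fun h ↦ f (stencil s u x h) - f (stencil s P x h))
      =O[𝓝 0] fun h ↦ stencil s u x h - stencil s P x h :=
    (hf.contDiffAt.hasStrictDerivAt one_ne_zero).hasStrictFDerivAt.isBigO_sub.comp_tendsto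
      ((tendsto_of_isBigO hSu).prodMk_nhds (tendsto_of_isBigO hSP))
  have hdiff : (fun h ↦ stencil s u x h - stencil s P x h) =O[𝓝 0] fun h ↦ h ^ n := by
    simpa only [← stencil_sub] using isBigO_stencil huP
  have htaylor : (fun h ↦ f (stencil s P x h) - F (stencil s P x h)) =O[𝓝 0] fun h ↦ h ^ n :=
    (hfF.comp_tendsto (tendsto_of_isBigO hSP)).trans (hSP.pow n)
  exact ((hlip.trans hdiff).add htaylor).congr_left fun h ↦ by ring

/-- `2 h` times the error in the main theorem, once the cell integral of `(f ∘ u)'` is evaluated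
by the fundamental theorem of calculus. -/
noncomputable def quickDefect (f v : ℝ → ℝ) (x h : ℝ) : ℝ :=
  f (uL (1 / 2) x v h) + f (uR (1 / 2) x v h) - f (uLm (1 / 2) x v h) - f (uRm (1 / 2) x v h)
    - 2 * (f (v (x + h / 2)) - f (v (x - h / 2)))

/-- This identity is where the QUICK weights `κ = 1/2` matter: for cubic data every term of order
below `h⁴` cancels. -/
theorem quickDefect_cubic (a c₁ c₂ c₃ b₀ b₁ b₂ b₃ x h : ℝ) :
    quickDefect (fun q ↦ b₀ + b₁ * (q - a) + b₂ * (q - a) ^ 2 + b₃ * (q - a) ^ 3)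
      (fun y ↦ a + c₁ * (y - x) + c₂ * (y - x) ^ 2 + c₃ * (y - x) ^ 3) x h
      = h ^ 4 * (27 / 32 * c₁ * c₃ ^ 2 * b₃ * h ^ 3 + 27 / 128 * c₃ ^ 3 * b₃ * h ^ 5) := by
  simp only [quickDefect, uLm, uRm, uL, uR]
  ring

theorem isBigO_quickDefect {f u : ℝ → ℝ} (hf : ContDiff ℝ 4 f) (hu : ContDiff ℝ 4 u) (x : ℝ) :
    (fun h ↦ quickDefect f u x h) =O[𝓝 0] fun h ↦ h ^ 4 := by
  obtain ⟨c₁, c₂, c₃, huP⟩ := hu.exists_cubic_isBigO x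
  obtain ⟨b₁, b₂, b₃, hfF⟩ := hf.exists_cubic_isBigO (u x)
  set P : ℝ → ℝ := fun y ↦ u x + c₁ * (y - x) + c₂ * (y - x) ^ 2 + c₃ * (y - x) ^ 3
  set F : ℝ → ℝ := fun q ↦ f (u x) + b₁ * (q - u x) + b₂ * (q - u x) ^ 2 + b₃ * (q - u x) ^ 3
  have face (s : List (ℝ × ℝ)) (hs : (s.map Prod.fst).sum = 1) :
      (fun h ↦ f (stencil s u x h) - F (stencil s P x h)) =O[𝓝 0] fun h ↦ h ^ 4 :=
    isBigO_comp_stencil_sub hs (hf.of_le (by norm_num)) hfF huP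
      (hu.differentiable (by norm_num) x) (by fun_prop) (by simp [P])
  have hcubic : (fun h ↦ quickDefect F P x h) =O[𝓝 0] fun h ↦ h ^ 4 := by
    simp only [F, P, quickDefect_cubic]
    have hR : Continuous fun h : ℝ ↦
        27 / 32 * c₁ * c₃ ^ 2 * b₃ * h ^ 3 + 27 / 128 * c₃ ^ 3 * b₃ * h ^ 5 := by
      fun_prop
    simpa using (isBigO_refl (fun h : ℝ ↦ h ^ 4) _).mul ((hR.tendsto 0).isBigO_one ℝ)
  have hsum := ((((face (uLStencil (1 / 2)) (by norm_num [uLStencil])).add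
    (face (uRStencil (1 / 2)) (by norm_num [uRStencil]))).sub
    (face (uLmStencil (1 / 2)) (by norm_num [uLmStencil]))).sub
    (face (uRmStencil (1 / 2)) (by norm_num [uRmStencil]))).sub
    (((face [(1, 1 / 2)] (by simp)).sub (face [(1, -1 / 2)] (by simp))).const_mul_left 2)
  refine (hsum.add hcubic).congr_left fun h ↦ ?_
  simp only [quickDefect, uL_eq_stencil, uR_eq_stencil, uLm_eq_stencil, uRm_eq_stencil,
    stencil_singleton]
  ring_nf

theorem quick_third_order_finite_volume (f u : ℝ → ℝ) (hf : ContDiff ℝ 4 f)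
    (hu : ContDiff ℝ 4 u) (x : ℝ) :
    (fun h : ℝ =>
        (1 / (2 * h)) * (f (uL (1 / 2) x u h) + f (uR (1 / 2) x u h)
          - f (uLm (1 / 2) x u h) - f (uRm (1 / 2) x u h))
        - (1 / h) * (∫ ξ in (x - h / 2)..(x + h / 2), deriv (f ∘ u) ξ))
      =O[nhdsWithin 0 (Set.Ioi 0)] fun h : ℝ => h ^ 3 := by
  have hfu : ContDiff ℝ 1 (f ∘ u) := (hf.comp hu).of_le (by norm_num)
  have hFTC (h : ℝ) : ∫ ξ in (x - h / 2)..(x + h / 2), deriv (f ∘ u) ξ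
      = f (u (x + h / 2)) - f (u (x - h / 2)) :=
    intervalIntegral.integral_deriv_eq_sub
      (fun ξ _ ↦ (hfu.differentiable one_ne_zero).differentiableAt)
      ((hfu.continuous_deriv le_rfl).intervalIntegrable _ _)
  have hdiv : (fun h : ℝ ↦ 1 / (2 * h) * h ^ 4) =ᶠ[𝓝[>] 0] fun h ↦ 1 / 2 * h ^ 3 := by
    filter_upwards [self_mem_nhdsWithin] with h (hh : 0 < h)
    field_simp
  have hD := (isBigO_quickDefect hf hu x).mono (nhdsWithin_le_nhds (s := Ioi 0))
  refine (((isBigO_refl (fun h : ℝ ↦ 1 / (2 * h)) _).mul hD).trans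
    (hdiv.trans_isBigO ((isBigO_refl _ _).const_mul_left _))).congr_left fun h ↦ ?_
  rw [hFTC, quickDefect]
  ring
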